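/- arXiv:2504.16522 — 2 statements merged into one kernel-verified Lean document; each statement's English description precedes it below -/
import Mathlib

section
/- For all natural numbers n ≥ 0, the type B Bell number is given by the convergent series B(n) = e^(-1/2) · Σ_{r≥0} (2r+1)^n / (2^r · r!). -/
/-- The classical Stirling numbers of the second kind, defined by the recurrence
`S(n,k) = S(n-1,k-1) + k·S(n-1,k)` with `S(0,k) = δ_{0,k}`. -/
def stirling2 : ℕ → ℕ → ℕ
  | 0, 0 => 1
  | 0, _ + 1 => 0
  | _ + 1, 0 => 0
  | n + 1, k + 1 => stirling2 n k + (k + 1) * stirling2 n (k + 1)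

/-- The type `B` Stirling numbers of the second kind, defined by the recurrence
`S_B(n,k) = S_B(n-1,k-1) + (2k+1)·S_B(n-1,k)` with `S_B(0,k) = δ_{0,k}`. -/
def stirlingB : ℕ → ℕ → ℕ
  | 0, 0 => 1
  | 0, _ + 1 => 0
  | n + 1, 0 => stirlingB n 0
  | n + 1, k + 1 => stirlingB n k + (2 * (k + 1) + 1) * stirlingB n (k + 1)

/-- The type `B` Bell numbers: `B(n) = Σ_{k=0}^{n} S_B(n,k)`. -/
def bellB (n : ℕ) : ℕ := ∑ k ∈ Finset.range (n + 1), stirlingB n k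

lemma stirlingB_eq_zero : ∀ n k : ℕ, n < k → stirlingB n k = 0
  | 0, _ + 1, _ => rfl
  | n + 1, k + 1, h => by
    have h1 : stirlingB n k = 0 := stirlingB_eq_zero n k (by omega)
    have h2 : stirlingB n (k + 1) = 0 := stirlingB_eq_zero n (k + 1) (by omega)
    simp [stirlingB, h1, h2]

lemma descFact_step (r k : ℕ) :
    (2 * r + 1) * (2 ^ k * r.descFactorial k)
      = 2 ^ (k + 1) * r.descFactorial (k + 1)
        + (2 * k + 1) * (2 ^ k * r.descFactorial k) := by
  rw [Nat.descFactorial_succ]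
  rcases le_or_gt k r with h | h
  · have h2 : 2 ^ (k + 1) * ((r - k) * r.descFactorial k)
        + (2 * k + 1) * (2 ^ k * r.descFactorial k)
        = (2 * (r - k) + (2 * k + 1)) * (2 ^ k * r.descFactorial k) := by ring
    rw [h2]
    congr 1
    omega
  · rw [Nat.descFactorial_eq_zero_iff_lt.mpr h]
    simp

lemma key (n r : ℕ) :
    (2 * r + 1) ^ n
      = ∑ k ∈ Finset.range (n + 1), stirlingB n k * (2 ^ k * r.descFactorial k) := by
  induction n with
  | zero => simp [stirlingB]
  | succ n ih =>
    have hstep : (2 * r + 1) ^ (n + 1) = (2 * r + 1) * (2 * r + 1) ^ n := by ring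
    have hext : (2 * r + 1) ^ n
        = ∑ k ∈ Finset.range (n + 2), stirlingB n k * (2 ^ k * r.descFactorial k) := by
      rw [Finset.sum_range_succ, stirlingB_eq_zero n (n + 1) (by omega)]
      simpa using ih
    rw [hstep, hext, Finset.mul_sum]
    have hterm : ∀ k, (2 * r + 1) * (stirlingB n k * (2 ^ k * r.descFactorial k))
        = stirlingB n k * (2 ^ (k + 1) * r.descFactorial (k + 1))
          + (2 * k + 1) * stirlingB n k * (2 ^ k * r.descFactorial k) := by
      intro k
      have := descFact_step r k
      calc (2 * r + 1) * (stirlingB n k * (2 ^ k * r.descFactorial k))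
          = stirlingB n k * ((2 * r + 1) * (2 ^ k * r.descFactorial k)) := by ring
        _ = stirlingB n k * (2 ^ (k + 1) * r.descFactorial (k + 1)
              + (2 * k + 1) * (2 ^ k * r.descFactorial k)) := by rw [this]
        _ = _ := by ring
    rw [Finset.sum_congr rfl fun k _ => hterm k, Finset.sum_add_distrib]
    -- A := ∑_{k∈range(n+2)} S(n,k) * 2^{k+1} df(k+1)
    -- B := ∑_{k∈range(n+2)} (2k+1) S(n,k) * 2^k df k
    -- target: ∑_{k∈range(n+2)} S(n+1,k) * 2^k df k
    rw [show (Finset.range (n + 2)).sum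
          (fun k => stirlingB n k * (2 ^ (k + 1) * r.descFactorial (k + 1)))
        = ∑ k ∈ Finset.range (n + 1),
            stirlingB n k * (2 ^ (k + 1) * r.descFactorial (k + 1)) from by
      rw [Finset.sum_range_succ, stirlingB_eq_zero n (n + 1) (by omega)]; simp]
    rw [Finset.sum_range_succ' (fun k => (2 * k + 1) * stirlingB n k * (2 ^ k * r.descFactorial k)) (n + 1)]
    rw [Finset.sum_range_succ' (fun k => stirlingB (n + 1) k * (2 ^ k * r.descFactorial k)) (n + 1)]
    have h0 : stirlingB (n + 1) 0 = stirlingB n 0 := rfl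
    rw [h0]
    have hrec : ∀ k, stirlingB (n + 1) (k + 1)
        = stirlingB n k + (2 * (k + 1) + 1) * stirlingB n (k + 1) := fun k => rfl
    have : ∀ k, stirlingB (n + 1) (k + 1) * (2 ^ (k + 1) * r.descFactorial (k + 1))
        = stirlingB n k * (2 ^ (k + 1) * r.descFactorial (k + 1))
          + (2 * (k + 1) + 1) * stirlingB n (k + 1)
            * (2 ^ (k + 1) * r.descFactorial (k + 1)) := by
      intro k; rw [hrec]; ring
    rw [Finset.sum_congr rfl fun k _ => this k, Finset.sum_add_distrib]
    simp only [pow_zero, one_mul, Nat.descFactorial_zero, mul_one]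
    ring


lemma hasSum_aux (k : ℕ) :
    HasSum (fun r : ℕ => (r.descFactorial k : ℝ) / (2 ^ r * r.factorial))
      ((1 / 2) ^ k * Real.exp (1 / 2)) := by
  have hexp : HasSum (fun s : ℕ => ((1 : ℝ) / 2) ^ s / s.factorial) (Real.exp (1 / 2)) := by
    rw [Real.exp_eq_exp_ℝ]
    exact NormedSpace.expSeries_div_hasSum_exp (1 / 2 : ℝ)
  have h1 : HasSum (fun s : ℕ => ((1 : ℝ) / 2) ^ k * (((1 : ℝ) / 2) ^ s / s.factorial))
      ((1 / 2) ^ k * Real.exp (1 / 2)) := hexp.mul_left _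
  have heq : ∀ s : ℕ, ((s + k).descFactorial k : ℝ) / (2 ^ (s + k) * (s + k).factorial)
      = (1 / 2) ^ k * ((1 / 2) ^ s / s.factorial) := by
    intro s
    have hd : (s + k - k).factorial * (s + k).descFactorial k = (s + k).factorial :=
      Nat.factorial_mul_descFactorial (by omega)
    rw [show s + k - k = s by omega] at hd
    have hd' : (s.factorial : ℝ) * ((s + k).descFactorial k : ℝ) = ((s + k).factorial : ℝ) := by
      exact_mod_cast congrArg (Nat.cast : ℕ → ℝ) hd
    have hs : (s.factorial : ℝ) ≠ 0 := Nat.cast_ne_zero.mpr s.factorial_ne_zero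
    have hsk : ((s + k).factorial : ℝ) ≠ 0 := Nat.cast_ne_zero.mpr (s + k).factorial_ne_zero
    have h2 : (2 : ℝ) ^ (s + k) ≠ 0 := by positivity
    field_simp
    rw [pow_add]
    have hA : (2:ℝ) ^ s * (1 / 2) ^ s = 1 := by rw [← mul_pow]; norm_num
    have hB : (2:ℝ) ^ k * (1 / 2) ^ k = 1 := by rw [← mul_pow]; norm_num
    linear_combination hd' - ((s + k).factorial : ℝ) * hA
      - ((s + k).factorial : ℝ) * ((2:ℝ) ^ s * (1 / 2) ^ s) * hB
  have h2 : HasSum (fun s : ℕ => ((s + k).descFactorial k : ℝ) / (2 ^ (s + k) * (s + k).factorial))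
      ((1 / 2) ^ k * Real.exp (1 / 2)) := by
    simpa only [heq] using h1
  have h3 := (hasSum_nat_add_iff (f := fun r : ℕ => (r.descFactorial k : ℝ) / (2 ^ r * r.factorial)) k).mp h2
  have hz : ∑ i ∈ Finset.range k, (i.descFactorial k : ℝ) / (2 ^ i * i.factorial) = 0 := by
    apply Finset.sum_eq_zero
    intro i hi
    rw [Nat.descFactorial_eq_zero_iff_lt.mpr (Finset.mem_range.mp hi)]
    simp
  rwa [hz, add_zero] at h3


/-- `B(n) = e^(-1/2) · Σ_{r≥0} (2r+1)^n / (2^r · r!)`, a convergent series. -/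
theorem bellB_eq_tsum (n : ℕ) :
    Summable (fun r : ℕ => ((2 * r + 1 : ℝ)) ^ n / (2 ^ r * (r.factorial : ℝ))) ∧
    (bellB n : ℝ)
      = Real.exp (-1 / 2) * ∑' r : ℕ, ((2 * r + 1 : ℝ)) ^ n / (2 ^ r * (r.factorial : ℝ)) := by
  have hpt : ∀ r : ℕ, ((2 * r + 1 : ℝ)) ^ n / (2 ^ r * (r.factorial : ℝ))
      = ∑ k ∈ Finset.range (n + 1),
          ((stirlingB n k : ℝ) * 2 ^ k) * ((r.descFactorial k : ℝ) / (2 ^ r * r.factorial)) := by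
    intro r
    have hk := key n r
    have hcast : ((2 * r + 1 : ℝ)) ^ n
        = ∑ k ∈ Finset.range (n + 1), (stirlingB n k : ℝ) * (2 ^ k * r.descFactorial k) := by
      exact_mod_cast congrArg (Nat.cast : ℕ → ℝ) hk
    rw [hcast, Finset.sum_div]
    refine Finset.sum_congr rfl fun k _ => ?_
    ring
  have hsum : HasSum (fun r : ℕ => ((2 * r + 1 : ℝ)) ^ n / (2 ^ r * (r.factorial : ℝ)))
      (∑ k ∈ Finset.range (n + 1),
        ((stirlingB n k : ℝ) * 2 ^ k) * ((1 / 2) ^ k * Real.exp (1 / 2))) := by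
    have h := hasSum_sum (f := fun (k : ℕ) (r : ℕ) =>
        ((stirlingB n k : ℝ) * 2 ^ k) * ((r.descFactorial k : ℝ) / (2 ^ r * r.factorial)))
      (s := Finset.range (n + 1))
      (a := fun k => ((stirlingB n k : ℝ) * 2 ^ k) * ((1 / 2) ^ k * Real.exp (1 / 2)))
      (fun k _ => (hasSum_aux k).mul_left _)
    exact (funext hpt ▸ h : _)
  have hval : (∑ k ∈ Finset.range (n + 1),
        ((stirlingB n k : ℝ) * 2 ^ k) * ((1 / 2) ^ k * Real.exp (1 / 2)))
      = (bellB n : ℝ) * Real.exp (1 / 2) := by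
    rw [bellB, Nat.cast_sum, Finset.sum_mul]
    refine Finset.sum_congr rfl fun k _ => ?_
    have : (2 : ℝ) ^ k * (1 / 2) ^ k = 1 := by
      rw [← mul_pow]; norm_num
    calc ((stirlingB n k : ℝ) * 2 ^ k) * ((1 / 2) ^ k * Real.exp (1 / 2))
        = (stirlingB n k : ℝ) * (2 ^ k * (1 / 2) ^ k) * Real.exp (1 / 2) := by ring
      _ = (stirlingB n k : ℝ) * Real.exp (1 / 2) := by rw [this, mul_one]
  rw [hval] at hsum
  refine ⟨hsum.summable, ?_⟩
  rw [hsum.tsum_eq, ← mul_assoc, mul_comm (Real.exp (-1 / 2)), mul_assoc,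
    ← Real.exp_add]
  norm_num
end

section
/- For all natural numbers n ≥ 0, Σ_{k=0}^{n} (2k+1) · S_B(n,k) = Σ_{k=0}^{n} C(n,k) · 2^k · B(n-k). -/
lemma stirlingB_of_lt : ∀ {n k : ℕ}, n < k → stirlingB n k = 0 := by
  intro n
  induction n with
  | zero =>
      intro k h
      match k, h with
      | k + 1, _ => rfl
  | succ n ih =>
      intro k h
      match k, h with
      | k + 1, h =>
          have h1 : n < k := by omega
          have h2 : n < k + 1 := by omega
          simp [stirlingB, ih h1, ih h2]

lemma sum_stirlingB_trunc {i m : ℕ} (h : i ≤ m) :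
    ∑ k ∈ Finset.range (m + 1), stirlingB i k = bellB i := by
  rw [bellB]
  symm
  apply Finset.sum_subset
  · exact Finset.range_subset_range.2 (by omega)
  · intro x hx hnx
    apply stirlingB_of_lt
    simp only [Finset.mem_range] at hnx
    omega

def TB (n k : ℕ) : ℕ :=
  ∑ i ∈ Finset.range (n + 1), Nat.choose n i * 2 ^ (n - i) * stirlingB i k

lemma TB_succ (n k : ℕ) :
    TB (n + 1) k = 2 * TB n k
      + ∑ j ∈ Finset.range (n + 1), Nat.choose n j * 2 ^ (n - j) * stirlingB (j + 1) k := by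
  have e1 : TB (n + 1) k
      = (∑ j ∈ Finset.range (n + 1),
          (Nat.choose n j * 2 ^ (n - j) * stirlingB (j + 1) k
            + Nat.choose n (j + 1) * 2 ^ (n - j) * stirlingB (j + 1) k))
        + 2 ^ (n + 1) * stirlingB 0 k := by
    rw [TB, Finset.sum_range_succ' _ (n + 1)]
    congr 1
    · apply Finset.sum_congr rfl
      intro j hj
      rw [Nat.choose_succ_succ]
      have : n + 1 - (j + 1) = n - j := by omega
      rw [this, add_mul, add_mul]
    · simp
  have e2 : 2 * TB n k
      = (∑ j ∈ Finset.range (n + 1),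
          Nat.choose n (j + 1) * 2 ^ (n - j) * stirlingB (j + 1) k)
        + 2 ^ (n + 1) * stirlingB 0 k := by
    rw [TB, Finset.mul_sum, Finset.sum_range_succ' _ n]
    have e3 : ∑ j ∈ Finset.range (n + 1),
        Nat.choose n (j + 1) * 2 ^ (n - j) * stirlingB (j + 1) k
          = ∑ j ∈ Finset.range n,
            Nat.choose n (j + 1) * 2 ^ (n - j) * stirlingB (j + 1) k := by
      rw [Finset.sum_range_succ, Nat.choose_succ_self, zero_mul, zero_mul, add_zero]
    rw [e3]
    congr 1
    · apply Finset.sum_congr rfl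
      intro j hj
      simp only [Finset.mem_range] at hj
      have : n - j = (n - (j + 1)) + 1 := by omega
      rw [this, pow_succ]
      ring
    · simp [pow_succ]
      ring
  rw [e1, Finset.sum_add_distrib, e2]
  ring

lemma key_s4 : ∀ n k, stirlingB (n + 1) (k + 1) = stirlingB n (k + 1) + TB n k := by
  intro n
  induction n with
  | zero =>
      intro k
      cases k <;> simp [stirlingB, TB]
  | succ n ih =>
      intro k
      cases k with
      | zero =>
          have hsum : ∑ j ∈ Finset.range (n + 1),
              Nat.choose n j * 2 ^ (n - j) * stirlingB (j + 1) 0 = TB n 0 := by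
            rw [TB]
            apply Finset.sum_congr rfl
            intro j hj
            rfl
          have hT0 : TB (n + 1) 0 = 3 * TB n 0 := by
            rw [TB_succ, hsum]; ring
          show stirlingB (n + 2) 1 = stirlingB (n + 1) 1 + TB (n + 1) 0
          calc stirlingB (n + 2) 1
              = stirlingB (n + 1) 0 + (2 * (0 + 1) + 1) * stirlingB (n + 1) (0 + 1) := rfl
            _ = stirlingB n 0 + (2 * (0 + 1) + 1) * (stirlingB n (0 + 1) + TB n 0) := by
                rw [show stirlingB (n + 1) 0 = stirlingB n 0 from rfl, ih 0]
            _ = (stirlingB n 0 + (2 * (0 + 1) + 1) * stirlingB n (0 + 1)) + 3 * TB n 0 := by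
                ring
            _ = stirlingB (n + 1) 1 + TB (n + 1) 0 := by rw [hT0]; rfl
      | succ m =>
          have hsum : ∑ j ∈ Finset.range (n + 1),
              Nat.choose n j * 2 ^ (n - j) * stirlingB (j + 1) (m + 1)
                = TB n m + (2 * (m + 1) + 1) * TB n (m + 1) := by
            rw [TB, TB, Finset.mul_sum, ← Finset.sum_add_distrib]
            apply Finset.sum_congr rfl
            intro j hj
            show Nat.choose n j * 2 ^ (n - j)
                * (stirlingB j m + (2 * (m + 1) + 1) * stirlingB j (m + 1)) = _
            ring
          have hT : TB (n + 1) (m + 1)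
              = TB n m + (2 * (m + 1) + 1 + 2) * TB n (m + 1) := by
            rw [TB_succ, hsum]; ring
          show stirlingB (n + 2) (m + 2) = stirlingB (n + 1) (m + 2) + TB (n + 1) (m + 1)
          calc stirlingB (n + 2) (m + 2)
              = stirlingB (n + 1) (m + 1) + (2 * (m + 2) + 1) * stirlingB (n + 1) (m + 2) := rfl
            _ = (stirlingB n (m + 1) + TB n m)
                + (2 * (m + 2) + 1) * (stirlingB n (m + 2) + TB n (m + 1)) := by
                rw [ih m, ih (m + 1)]
            _ = (stirlingB n (m + 1) + (2 * (m + 2) + 1) * stirlingB n (m + 2))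
                + (TB n m + (2 * (m + 2) + 1) * TB n (m + 1)) := by ring
            _ = stirlingB (n + 1) (m + 2)
                + (TB n m + (2 * (m + 2) + 1) * TB n (m + 1)) := rfl
            _ = stirlingB (n + 1) (m + 2) + TB (n + 1) (m + 1) := by rw [hT]; ring

lemma bellB_succ (n : ℕ) :
    bellB (n + 1) = bellB n + ∑ k ∈ Finset.range (n + 1), TB n k := by
  have h0 : bellB n + stirlingB n (n + 1) = ∑ k ∈ Finset.range (n + 2), stirlingB n k := by
    rw [Finset.sum_range_succ, bellB]
  rw [show bellB (n + 1) = ∑ k ∈ Finset.range (n + 2), stirlingB (n + 1) k from rfl,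
    Finset.sum_range_succ' _ (n + 1)]
  have h1 : ∀ k ∈ Finset.range (n + 1),
      stirlingB (n + 1) (k + 1) = stirlingB n (k + 1) + TB n k := fun k _ => key_s4 n k
  rw [Finset.sum_congr rfl h1, Finset.sum_add_distrib]
  have h2 : stirlingB (n + 1) 0 = stirlingB n 0 := rfl
  have h3 : (∑ k ∈ Finset.range (n + 1), stirlingB n (k + 1)) + stirlingB n 0
      = ∑ k ∈ Finset.range (n + 2), stirlingB n k := (Finset.sum_range_succ' _ (n + 1)).symm
  have h4 : stirlingB n (n + 1) = 0 := stirlingB_of_lt (by omega)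
  omega

/-- `Σ_{k=0}^{n} (2k+1)·S_B(n,k) = Σ_{k=0}^{n} C(n,k)·2^k·B(n-k)`. -/
theorem sum_odd_mul_stirlingB (n : ℕ) :
    ∑ k ∈ Finset.range (n + 1), (2 * k + 1) * stirlingB n k
      = ∑ k ∈ Finset.range (n + 1), Nat.choose n k * 2 ^ k * bellB (n - k) := by
  have hL : bellB n + ∑ k ∈ Finset.range (n + 1), (2 * k + 1) * stirlingB n k
      = bellB (n + 1) := by
    rw [show bellB (n + 1) = ∑ k ∈ Finset.range (n + 2), stirlingB (n + 1) k from rfl,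
      Finset.sum_range_succ' _ (n + 1)]
    have h1 : ∀ k ∈ Finset.range (n + 1),
        stirlingB (n + 1) (k + 1)
          = stirlingB n k + (2 * (k + 1) + 1) * stirlingB n (k + 1) := fun k _ => rfl
    rw [Finset.sum_congr rfl h1, Finset.sum_add_distrib]
    have h2 : stirlingB (n + 1) 0 = stirlingB n 0 := rfl
    have h3 : ∑ k ∈ Finset.range (n + 1), stirlingB n k = bellB n := rfl
    have h4 : ∑ k ∈ Finset.range (n + 2), (2 * k + 1) * stirlingB n k
        = (∑ k ∈ Finset.range (n + 1), (2 * (k + 1) + 1) * stirlingB n (k + 1))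
          + (2 * 0 + 1) * stirlingB n 0 := Finset.sum_range_succ' _ (n + 1)
    have h5 : ∑ k ∈ Finset.range (n + 2), (2 * k + 1) * stirlingB n k
        = (∑ k ∈ Finset.range (n + 1), (2 * k + 1) * stirlingB n k)
          + (2 * (n + 1) + 1) * stirlingB n (n + 1) := Finset.sum_range_succ _ (n + 1)
    have h6 : stirlingB n (n + 1) = 0 := stirlingB_of_lt (by omega)
    rw [h6, mul_zero, add_zero] at h5
    omega
  have hswap : ∑ k ∈ Finset.range (n + 1), TB n k
      = ∑ i ∈ Finset.range (n + 1), Nat.choose n i * 2 ^ (n - i) * bellB i := by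
    simp only [TB]
    rw [Finset.sum_comm]
    apply Finset.sum_congr rfl
    intro i hi
    simp only [Finset.mem_range] at hi
    rw [← Finset.mul_sum, sum_stirlingB_trunc (by omega : i ≤ n)]
  have hrefl : ∑ k ∈ Finset.range (n + 1), Nat.choose n k * 2 ^ k * bellB (n - k)
      = ∑ i ∈ Finset.range (n + 1), Nat.choose n i * 2 ^ (n - i) * bellB i := by
    rw [← Finset.sum_range_reflect (fun j => Nat.choose n j * 2 ^ (n - j) * bellB j) (n + 1)]
    apply Finset.sum_congr rfl
    intro k hk
    simp only [Finset.mem_range] at hk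
    have hk' : k ≤ n := by omega
    have e1 : n + 1 - 1 - k = n - k := by omega
    have e2 : n - (n - k) = k := by omega
    rw [e1, e2, Nat.choose_symm hk']
  have hB := bellB_succ n
  omega
end
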